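/- For every A = (λ₁, λ₂, λ₃, a, b, c) ∈ J₃(𝕆), the determinant det(M_A) equals the determinant (over ℂ, on the 8-dimensional space 𝕆) of the ℂ-linear endomorphism (det_𝕆(A) − 2·Re(c·(a·b)))·id + L_a∘L_b∘L_c + L_c̄∘L_b̄∘L_ā of 𝕆. -/

import Mathlib

noncomputable section

open scoped Quaternion

/-- The complexified quaternions. -/
abbrev Hq : Type := Quaternion ℂ

theorem q_mul_smul (t : ℂ) (a b : Hq) : a * (t • b) = t • (a * b) := by
  rw [← Quaternion.coe_mul_eq_smul, ← Quaternion.coe_mul_eq_smul, ← mul_assoc,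
    ← Quaternion.coe_commutes, mul_assoc]

theorem q_smul_mul (t : ℂ) (a b : Hq) : (t • a) * b = t • (a * b) := by
  rw [← Quaternion.coe_mul_eq_smul, ← Quaternion.coe_mul_eq_smul, mul_assoc]

/-- The complexified octonions, via the Cayley–Dickson construction. -/
abbrev Oct : Type := Hq × Hq

namespace Oct

/-- Octonion multiplication (Cayley–Dickson construction). -/
def omul (x y : Oct) : Oct := (x.1 * y.1 - star y.2 * x.2, y.2 * x.1 + x.2 * star y.1)

/-- Octonion conjugation. -/
def oconj (x : Oct) : Oct := (star x.1, -x.2)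

/-- The unit octonion. -/
def oone : Oct := (1, 0)

/-- Real part of an octonion: the unique scalar with `x + oconj x = (2 * oRe x) • oone`. -/
def oRe (x : Oct) : ℂ := x.1.re

/-- Squared norm of an octonion: the unique scalar with `omul x (oconj x) = onormSq x • oone`. -/
def onormSq (x : Oct) : ℂ := Quaternion.normSq x.1 + Quaternion.normSq x.2

theorem omul_add (z x y : Oct) : omul z (x + y) = omul z x + omul z y := by
  have hs : ∀ p q : Hq, star (p + q) = star p + star q := fun p q => star_add p q
  simp only [omul, Prod.fst_add, Prod.snd_add, star_add, hs, mul_add, add_mul, Prod.mk_add_mk,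
    Prod.mk.injEq]
  constructor <;> abel

theorem add_omul (x y z : Oct) : omul (x + y) z = omul x z + omul y z := by
  simp only [omul, Prod.fst_add, Prod.snd_add, star_add, mul_add, add_mul, Prod.mk_add_mk,
    Prod.mk.injEq]
  constructor <;> abel

theorem omul_smul (t : ℂ) (z x : Oct) : omul z (t • x) = t • omul z x := by
  simp only [omul, Prod.smul_fst, Prod.smul_snd, Quaternion.star_smul, q_smul_mul,
    q_mul_smul, Prod.smul_mk, smul_sub, smul_add]

theorem smul_omul (t : ℂ) (x z : Oct) : omul (t • x) z = t • omul x z := by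
  simp only [omul, Prod.smul_fst, Prod.smul_snd, Quaternion.star_smul, q_smul_mul,
    q_mul_smul, Prod.smul_mk, smul_sub, smul_add]

/-- Left multiplication `L_z` as a `ℂ`-linear endomorphism of the octonions. -/
def Lmul (z : Oct) : Oct →ₗ[ℂ] Oct where
  toFun x := omul z x
  map_add' x y := omul_add z x y
  map_smul' t x := omul_smul t z x

/-- Right multiplication `R_z` as a `ℂ`-linear endomorphism of the octonions. -/
def Rmul (z : Oct) : Oct →ₗ[ℂ] Oct where
  toFun x := omul x z
  map_add' x y := add_omul x y z
  map_smul' t x := smul_omul t x z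

end Oct

namespace Oct

/-- The octonionic determinant of the hermitian matrix
`[[λ₁, c, b̄], [c̄, λ₂, a], [b, ā, λ₃]]`. -/
def detO (l1 l2 l3 : ℂ) (a b c : Oct) : ℂ :=
  l1 * l2 * l3 + 2 * oRe (omul c (omul a b)) - l1 * onormSq a - l2 * onormSq b - l3 * onormSq c

/-- The associator `[c,b,a] = (c·b)·a − c·(b·a)`. -/
def assoc (c b a : Oct) : Oct := omul (omul c b) a - omul c (omul b a)

/-- `φ(c,b,a) = (1/2)·Re((c·b̄ − b̄·c)·a)`. -/
def phi (c b a : Oct) : ℂ := (1 / 2) * oRe (omul (omul c (oconj b) - omul (oconj b) c) a)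

/-- The Ogievetskiî–Dray–Manogue sextic. -/
def SODM (l1 l2 l3 : ℂ) (a b c : Oct) : ℂ :=
  detO l1 l2 l3 a b c ^ 2 - 4 * phi c b a * detO l1 l2 l3 a b c - onormSq (assoc c b a)

/-- The Cartan cubic `C'` of the hermitian matrix `[[λ₁, c̄, ā], [c, λ₂, b], [a, b̄, λ₃]]`. -/
def cartan' (l1 l2 l3 : ℂ) (a b c : Oct) : ℂ :=
  detO l1 l2 l3 a b c - 2 * oRe (omul c (omul a b)) + 2 * oRe (omul (oconj c) (omul b a))

/-- The sextic `𝔖`. -/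
def frakS (l1 l2 l3 : ℂ) (a b c : Oct) : ℂ :=
  (l1 * onormSq a + l2 * onormSq b + l3 * onormSq c - l1 * l2 * l3) ^ 2
    - 4 * (l1 * onormSq a + l2 * onormSq b + l3 * onormSq c - l1 * l2 * l3)
        * oRe c * oRe (omul a b)
    + 4 * (onormSq b * onormSq a * oRe c ^ 2 + onormSq c * oRe (omul a b) ^ 2
        - onormSq a * onormSq b * onormSq c)

/-- The endomorphism `M_A` of `𝕆³` attached to
`A = [[λ₁, c, b̄], [c̄, λ₂, a], [b, ā, λ₃]] ∈ J₃(𝕆)`. -/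
def MA (l1 l2 l3 : ℂ) (a b c : Oct) : Oct × Oct × Oct →ₗ[ℂ] Oct × Oct × Oct where
  toFun p := (l1 • p.1 + omul c p.2.1 + omul (oconj b) p.2.2,
              omul (oconj c) p.1 + l2 • p.2.1 + omul a p.2.2,
              omul b p.1 + omul (oconj a) p.2.1 + l3 • p.2.2)
  map_add' p q := by
    simp only [Prod.fst_add, Prod.snd_add, omul_add, smul_add, Prod.mk_add_mk, Prod.mk.injEq]
    refine ⟨?_, ?_, ?_⟩ <;> abel
  map_smul' t p := by
    simp only [Prod.smul_fst, Prod.smul_snd, omul_smul, smul_comm t, Prod.smul_mk, smul_add,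
      RingHom.id_apply]

/-- The endomorphism `N_A` of `𝕆³` of the twisted octonionic eigenvalue problem. -/
def NA (l1 l2 l3 : ℂ) (a b c : Oct) : Oct × Oct × Oct →ₗ[ℂ] Oct × Oct × Oct where
  toFun p := (l1 • p.1 + omul p.2.1 c + omul (oconj b) p.2.2,
              omul p.1 (oconj c) + l2 • p.2.1 + omul a p.2.2,
              omul b p.1 + omul (oconj a) p.2.1 + l3 • p.2.2)
  map_add' p q := by
    simp only [Prod.fst_add, Prod.snd_add, omul_add, add_omul, smul_add, Prod.mk_add_mk,
      Prod.mk.injEq]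
    refine ⟨?_, ?_, ?_⟩ <;> abel
  map_smul' t p := by
    simp only [Prod.smul_fst, Prod.smul_snd, omul_smul, smul_omul, smul_comm t, Prod.smul_mk,
      smul_add, RingHom.id_apply]

/-- The exceptional Jordan algebra `J₃(𝕆)`, as the 27-dimensional space of tuples
`(λ₁, λ₂, λ₃, a, b, c)`. -/
abbrev J3 : Type := ℂ × ℂ × ℂ × Oct × Oct × Oct

def MAj (A : J3) : Oct × Oct × Oct →ₗ[ℂ] Oct × Oct × Oct :=
  MA A.1 A.2.1 A.2.2.1 A.2.2.2.1 A.2.2.2.2.1 A.2.2.2.2.2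

def NAj (A : J3) : Oct × Oct × Oct →ₗ[ℂ] Oct × Oct × Oct :=
  NA A.1 A.2.1 A.2.2.1 A.2.2.2.1 A.2.2.2.2.1 A.2.2.2.2.2

def SODMj (A : J3) : ℂ := SODM A.1 A.2.1 A.2.2.1 A.2.2.2.1 A.2.2.2.2.1 A.2.2.2.2.2

def cartan'j (A : J3) : ℂ := cartan' A.1 A.2.1 A.2.2.1 A.2.2.2.1 A.2.2.2.2.1 A.2.2.2.2.2

def frakSj (A : J3) : ℂ := frakS A.1 A.2.1 A.2.2.1 A.2.2.2.1 A.2.2.2.2.1 A.2.2.2.2.2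

/-- A twisted triality pair: a pair of `ℂ`-linear norm-preserving bijections of `𝕆` with
`T₁(x)·T₂(y) = T₁(x·y)` for all `x, y`. -/
def TwistedPair (T1 T2 : Oct →ₗ[ℂ] Oct) : Prop :=
  Function.Bijective T1 ∧ Function.Bijective T2 ∧
    (∀ x, onormSq (T1 x) = onormSq x) ∧ (∀ x, onormSq (T2 x) = onormSq x) ∧
    ∀ x y, omul (T1 x) (T2 y) = T1 (omul x y)

/-- `K(x) = conj (T₁ x̄)`. -/
def Kmap (T1 : Oct →ₗ[ℂ] Oct) (x : Oct) : Oct := oconj (T1 (oconj x))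

/-- The twisted `Spin₇`-action on `J₃(𝕆)`:
`(T₁,T₂)·(λ₁, λ₂, λ₃, a, b, c) = (λ₁, λ₂, λ₃, T₁(a), K(b), T₂(c))`. -/
def spinAct (T1 T2 : Oct →ₗ[ℂ] Oct) (A : J3) : J3 :=
  (A.1, A.2.1, A.2.2.1, T1 A.2.2.2.1, Kmap T1 A.2.2.2.2.1, T2 A.2.2.2.2.2)

/-- The hermitian matrix `[[λ₁, c, b̄], [c̄, λ₂, a], [b, ā, λ₃]]` attached to `A ∈ J₃(𝕆)`,
with complex scalars embedded as multiples of the unit octonion. -/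
def toMat (A : J3) : Matrix (Fin 3) (Fin 3) Oct :=
  !![A.1 • oone, A.2.2.2.2.2, oconj A.2.2.2.2.1;
     oconj A.2.2.2.2.2, A.2.1 • oone, A.2.2.2.1;
     A.2.2.2.2.1, oconj A.2.2.2.1, A.2.2.1 • oone]

/-- The action of a (special linear) complex `3×3` matrix `C` on `J₃(𝕆)`, sending the hermitian
matrix `M` of `A` to `Cᵀ · M · C` (the entries of `C` being central scalars). -/
def slAct (C : Matrix (Fin 3) (Fin 3) ℂ) (A : J3) : J3 :=
  let M : Matrix (Fin 3) (Fin 3) Oct :=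
    Matrix.of fun i j => ∑ k, ∑ l, (C k i * C l j) • toMat A k l
  (oRe (M 0 0), oRe (M 1 1), oRe (M 2 2), M 1 2, M 2 0, M 0 1)

/-- The coordinates of `A ∈ J₃(𝕆)` in the fixed standard `ℂ`-basis of `ℂ³ × 𝕆³`. -/
def coords (A : J3) : Fin 27 → ℂ :=
  ![A.1, A.2.1, A.2.2.1,
    A.2.2.2.1.1.re, A.2.2.2.1.1.imI, A.2.2.2.1.1.imJ, A.2.2.2.1.1.imK,
    A.2.2.2.1.2.re, A.2.2.2.1.2.imI, A.2.2.2.1.2.imJ, A.2.2.2.1.2.imK,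
    A.2.2.2.2.1.1.re, A.2.2.2.2.1.1.imI, A.2.2.2.2.1.1.imJ, A.2.2.2.2.1.1.imK,
    A.2.2.2.2.1.2.re, A.2.2.2.2.1.2.imI, A.2.2.2.2.1.2.imJ, A.2.2.2.2.1.2.imK,
    A.2.2.2.2.2.1.re, A.2.2.2.2.2.1.imI, A.2.2.2.2.2.1.imJ, A.2.2.2.2.2.1.imK,
    A.2.2.2.2.2.2.re, A.2.2.2.2.2.2.imI, A.2.2.2.2.2.2.imJ, A.2.2.2.2.2.2.imK]

end Oct

/-!
Eliminating `x` from `M_A (x, y, z)` with the pivot `λ₁`, and then `z` with the pivot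
`ν = λ₃ - |b|²/λ₁`, takes two Schur complements. The identities `z̄·(z·x) = |z|² x = z·(z̄·x)`
collapse every product of left multiplications by a conjugate pair that appears, and what is left
is `(λ₁ ν)⁻¹` times the eight-dimensional operator. Both determinants are polynomial, hence
continuous, in `λ₃` and in `λ₁`, so the identity extends from `λ₁ ≠ 0, ν ≠ 0` to all `A`.
-/

namespace LinearMap

section FromBlocks

variable {K : Type*} [Field K] {M N : Type*} [AddCommGroup M] [Module K M] [AddCommGroup N]
  [Module K N]

def fromBlocks (A : M →ₗ[K] M) (B : N →ₗ[K] M) (C : M →ₗ[K] N) (D : N →ₗ[K] N) :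
    M × N →ₗ[K] M × N :=
  (A.coprod B).prod (C.coprod D)

@[simp]
theorem fromBlocks_apply (A : M →ₗ[K] M) (B : N →ₗ[K] M) (C : M →ₗ[K] N) (D : N →ₗ[K] N)
    (x : M × N) : fromBlocks A B C D x = (A x.1 + B x.2, C x.1 + D x.2) :=
  rfl

theorem toMatrix_fromBlocks {ι κ : Type*} [Fintype ι] [Fintype κ] [DecidableEq ι]
    [DecidableEq κ] (v : Module.Basis ι K M) (w : Module.Basis κ K N)
    (A : M →ₗ[K] M) (B : N →ₗ[K] M) (C : M →ₗ[K] N) (D : N →ₗ[K] N) :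
    toMatrix (v.prod w) (v.prod w) (fromBlocks A B C D) =
      Matrix.fromBlocks (toMatrix v v A) (toMatrix w v B) (toMatrix v w C) (toMatrix w w D) := by
  ext (i | i) (j | j) <;> simp [toMatrix_apply]

variable [FiniteDimensional K M] [FiniteDimensional K N]

theorem det_fromBlocks_smul_id₁₁ {t : K} (ht : t ≠ 0)
    (B : N →ₗ[K] M) (C : M →ₗ[K] N) (D : N →ₗ[K] N) :
    LinearMap.det (fromBlocks (t • id) B C D) =
      t ^ Module.finrank K M * LinearMap.det (D - t⁻¹ • C ∘ₗ B) := by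
  let v := Module.finBasis K M
  let w := Module.finBasis K N
  let _ : Invertible (toMatrix v v (t • id)) :=
    { invOf := toMatrix v v (t⁻¹ • id)
      invOf_mul_self := by rw [← toMatrix_mul, ← toMatrix_id v]; congr 1; ext; simp [ht]
      mul_invOf_self := by rw [← toMatrix_mul, ← toMatrix_id v]; congr 1; ext; simp [ht] }
  rw [← det_toMatrix (v.prod w), toMatrix_fromBlocks, Matrix.det_fromBlocks₁₁, det_toMatrix,
    det_smul, det_id, mul_one,
    show ⅟(toMatrix v v (t • id)) = toMatrix v v (t⁻¹ • id) from rfl,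
    ← toMatrix_comp, ← toMatrix_comp, ← map_sub, det_toMatrix]
  congr 2
  ext x
  simp

theorem det_fromBlocks_smul_id₂₂ {t : K} (ht : t ≠ 0)
    (A : M →ₗ[K] M) (B : N →ₗ[K] M) (C : M →ₗ[K] N) :
    LinearMap.det (fromBlocks A B C (t • id)) =
      t ^ Module.finrank K N * LinearMap.det (A - t⁻¹ • B ∘ₗ C) := by
  have hswap : fromBlocks A B C (t • id) = (LinearEquiv.prodComm K N M).toLinearMap ∘ₗ
      fromBlocks (t • id) C B A ∘ₗ (LinearEquiv.prodComm K N M).symm.toLinearMap := by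
    ext x <;> simp [add_comm]
  rw [hswap, det_conj, det_fromBlocks_smul_id₁₁ ht]

end FromBlocks

theorem continuous_det_add_smul {R V : Type*} [CommRing R] [TopologicalSpace R]
    [IsTopologicalRing R] [AddCommGroup V] [Module R V] [Module.Free R V] [Module.Finite R V]
    (f g : V →ₗ[R] V) : Continuous fun t : R => LinearMap.det (f + t • g) := by
  let b := Module.Free.chooseBasis R V
  simp_rw [← det_toMatrix b, map_add, map_smul]
  exact (continuous_const.add (continuous_id.smul continuous_const)).matrix_det

theorem det_add_smul_eq_of_forall_ne {K V W : Type*} [NontriviallyNormedField K]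
    [AddCommGroup V] [Module K V] [FiniteDimensional K V]
    [AddCommGroup W] [Module K W] [FiniteDimensional K W]
    (f g : V →ₗ[K] V) (f' g' : W →ₗ[K] W) (t₀ : K)
    (h : ∀ t ≠ t₀, LinearMap.det (f + t • g) = LinearMap.det (f' + t • g')) (t : K) :
    LinearMap.det (f + t • g) = LinearMap.det (f' + t • g') :=
  congrFun (Continuous.ext_on (dense_compl_singleton t₀) (continuous_det_add_smul f g)
    (continuous_det_add_smul f' g') h) t

end LinearMap

namespace Oct

theorem oconj_oconj (x : Oct) : oconj (oconj x) = x := by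
  simp [oconj]

theorem onormSq_oconj (x : Oct) : onormSq (oconj x) = onormSq x := by
  simp [onormSq, oconj]

theorem omul_sub (z x y : Oct) : omul z (x - y) = omul z x - omul z y :=
  map_sub (Lmul z) x y

theorem oconj_omul_omul (z x : Oct) : omul (oconj z) (omul z x) = onormSq z • x := by
  obtain ⟨p, q⟩ := z
  obtain ⟨u, v⟩ := x
  -- On `ℍ[ℂ]` the generic `star_add`, `mul_neg`, ... only unify once instantiated explicitly.
  simp only [omul, oconj, onormSq, star_add (R := Hq), star_sub (R := Hq), star_mul, star_star,
    Prod.smul_mk, Prod.mk.injEq]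
  constructor
  · calc star p * (p * u - star v * q) - (star p * star v + u * star q) * -q
        = star p * p * u + u * (star q * q) := by
          rw [mul_neg _ q, sub_neg_eq_add _ ((star p * star v + u * star q) * q)]
          simp only [mul_sub, add_mul, mul_assoc]
          abel
      _ = _ := by
        rw [Quaternion.star_mul_self, Quaternion.star_mul_self, ← Quaternion.coe_commutes,
          ← add_mul, ← Quaternion.coe_add, Quaternion.coe_mul_eq_smul]
  · calc (v * p + q * star u) * star p + -q * (star u * star p - star q * v)
        = v * (p * star p) + q * star q * v := by
          rw [neg_mul q, mul_sub, neg_sub]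
          simp only [add_mul, mul_assoc]
          abel
      _ = _ := by
        rw [Quaternion.self_mul_star, Quaternion.self_mul_star, Quaternion.coe_commutes,
          ← mul_add, ← Quaternion.coe_add, Quaternion.mul_coe_eq_smul]

theorem omul_oconj_omul (z x : Oct) : omul z (omul (oconj z) x) = onormSq z • x := by
  simpa [oconj_oconj, onormSq_oconj] using oconj_omul_omul (oconj z) x

def eightDimOp (l1 l2 l3 : ℂ) (a b c : Oct) : Oct →ₗ[ℂ] Oct :=
  (l1 * l2 * l3 - l1 * onormSq a - l2 * onormSq b - l3 * onormSq c) • LinearMap.id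
    + Lmul a ∘ₗ Lmul b ∘ₗ Lmul c + Lmul (oconj c) ∘ₗ Lmul (oconj b) ∘ₗ Lmul (oconj a)

section

variable (l1 l2 l3 : ℂ) (a b c : Oct)

theorem MA_eq_fromBlocks :
    MA l1 l2 l3 a b c =
      LinearMap.fromBlocks (l1 • LinearMap.id) ((Lmul c).coprod (Lmul (oconj b)))
        ((Lmul (oconj c)).prod (Lmul b))
        (LinearMap.fromBlocks (l2 • LinearMap.id) (Lmul a) (Lmul (oconj a))
          (l3 • LinearMap.id)) := by
  refine LinearMap.ext fun ⟨x, y, z⟩ => ?_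
  simp [MA, Lmul, add_assoc]

theorem fromBlocks_sub_smul_prod_comp_coprod :
    LinearMap.fromBlocks (l2 • LinearMap.id) (Lmul a) (Lmul (oconj a)) (l3 • LinearMap.id)
        - l1⁻¹ • ((Lmul (oconj c)).prod (Lmul b) ∘ₗ (Lmul c).coprod (Lmul (oconj b))) =
      LinearMap.fromBlocks ((l2 - l1⁻¹ * onormSq c) • LinearMap.id)
        (Lmul a - l1⁻¹ • Lmul (oconj c) ∘ₗ Lmul (oconj b))
        (Lmul (oconj a) - l1⁻¹ • Lmul b ∘ₗ Lmul c) ((l3 - l1⁻¹ * onormSq b) • LinearMap.id) := by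
  refine LinearMap.ext fun ⟨y, z⟩ => ?_
  simp only [Lmul, LinearMap.sub_apply, LinearMap.fromBlocks_apply, LinearMap.smul_apply,
    LinearMap.id_coe, id_eq, LinearMap.coe_mk, AddHom.coe_mk, LinearMap.coe_comp,
    Function.comp_apply, LinearMap.coprod_apply, LinearMap.prod_apply, Function.prod_apply,
    omul_add, oconj_omul_omul, omul_oconj_omul, Prod.smul_mk, smul_add, Prod.mk_sub_mk,
    Prod.mk.injEq]
  constructor <;> module

theorem smul_schur_complement_eq_eightDimOp (h1 : l1 ≠ 0) (hν : l3 - l1⁻¹ * onormSq b ≠ 0) :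
    (l1 * (l3 - l1⁻¹ * onormSq b)) •
        ((l2 - l1⁻¹ * onormSq c) • LinearMap.id - (l3 - l1⁻¹ * onormSq b)⁻¹ •
          ((Lmul a - l1⁻¹ • Lmul (oconj c) ∘ₗ Lmul (oconj b)) ∘ₗ
            (Lmul (oconj a) - l1⁻¹ • Lmul b ∘ₗ Lmul c))) =
      eightDimOp l1 l2 l3 a b c := by
  have hν' : l1 * l3 - onormSq b ≠ 0 := by
    rwa [show l1 * l3 - onormSq b = l1 * (l3 - l1⁻¹ * onormSq b) by field_simp,
      mul_ne_zero_iff_left h1]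
  refine LinearMap.ext fun x => ?_
  simp only [Lmul, LinearMap.smul_apply, LinearMap.sub_apply, LinearMap.id_coe, id_eq,
    LinearMap.coe_comp, Function.comp_apply, LinearMap.coe_mk, AddHom.coe_mk, omul_sub,
    omul_oconj_omul, omul_smul, oconj_omul_omul, eightDimOp, LinearMap.add_apply]
  match_scalars <;> field_simp
  ring

theorem det_MA_of_ne_zero_of_sub_ne_zero (h1 : l1 ≠ 0) (hν : l3 - l1⁻¹ * onormSq b ≠ 0) :
    LinearMap.det (MA l1 l2 l3 a b c) = LinearMap.det (eightDimOp l1 l2 l3 a b c) := by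
  rw [MA_eq_fromBlocks, LinearMap.det_fromBlocks_smul_id₁₁ h1,
    fromBlocks_sub_smul_prod_comp_coprod, LinearMap.det_fromBlocks_smul_id₂₂ hν,
    ← smul_schur_complement_eq_eightDimOp l1 l2 l3 a b c h1 hν, LinearMap.det_smul,
    Module.finrank_prod, mul_pow, mul_assoc]

theorem MA_eq_add_smul_l1 :
    MA l1 l2 l3 a b c = MA 0 l2 l3 a b c + l1 • LinearMap.id.prodMap 0 := by
  refine LinearMap.ext fun ⟨x, y, z⟩ => ?_
  simp only [MA, LinearMap.coe_mk, AddHom.coe_mk, LinearMap.add_apply, LinearMap.smul_apply,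
    LinearMap.prodMap_apply, LinearMap.id_coe, id_eq, LinearMap.zero_apply, Prod.smul_mk,
    smul_zero, Prod.mk_add_mk, add_zero, Prod.mk.injEq, and_true]
  module

theorem MA_eq_add_smul_l3 :
    MA l1 l2 l3 a b c =
      MA l1 l2 0 a b c + l3 • (0 : Oct →ₗ[ℂ] Oct).prodMap (LinearMap.prodMap 0 LinearMap.id) := by
  refine LinearMap.ext fun ⟨x, y, z⟩ => ?_
  simp only [MA, LinearMap.coe_mk, AddHom.coe_mk, LinearMap.add_apply, LinearMap.smul_apply,
    LinearMap.prodMap_apply, LinearMap.zero_apply, LinearMap.id_coe, id_eq, Prod.smul_mk,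
    smul_zero, Prod.mk_add_mk, add_zero, Prod.mk.injEq, true_and]
  module

theorem eightDimOp_eq_add_smul_l1 :
    eightDimOp l1 l2 l3 a b c =
      eightDimOp 0 l2 l3 a b c + l1 • (l2 * l3 - onormSq a) • LinearMap.id := by
  refine LinearMap.ext fun x => ?_
  simp only [eightDimOp, LinearMap.add_apply, LinearMap.smul_apply, LinearMap.id_coe, id_eq]
  module

theorem eightDimOp_eq_add_smul_l3 :
    eightDimOp l1 l2 l3 a b c =
      eightDimOp l1 l2 0 a b c + l3 • (l1 * l2 - onormSq c) • LinearMap.id := by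
  refine LinearMap.ext fun x => ?_
  simp only [eightDimOp, LinearMap.add_apply, LinearMap.smul_apply, LinearMap.id_coe, id_eq]
  module

end

theorem det_MA_of_ne_zero {l1 : ℂ} (h1 : l1 ≠ 0) (l2 l3 : ℂ) (a b c : Oct) :
    LinearMap.det (MA l1 l2 l3 a b c) = LinearMap.det (eightDimOp l1 l2 l3 a b c) := by
  rw [MA_eq_add_smul_l3, eightDimOp_eq_add_smul_l3]
  refine LinearMap.det_add_smul_eq_of_forall_ne _ _ _ _ (l1⁻¹ * onormSq b) (fun t ht => ?_) l3
  rw [← MA_eq_add_smul_l3, ← eightDimOp_eq_add_smul_l3]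
  exact det_MA_of_ne_zero_of_sub_ne_zero l1 l2 t a b c h1 (sub_ne_zero.2 ht)

theorem det_MA_eq_det_eightDimOp (l1 l2 l3 : ℂ) (a b c : Oct) :
    LinearMap.det (MA l1 l2 l3 a b c) = LinearMap.det (eightDimOp l1 l2 l3 a b c) := by
  rw [MA_eq_add_smul_l1, eightDimOp_eq_add_smul_l1]
  refine LinearMap.det_add_smul_eq_of_forall_ne _ _ _ _ 0 (fun t ht => ?_) l1
  rw [← MA_eq_add_smul_l1, ← eightDimOp_eq_add_smul_l1]
  exact det_MA_of_ne_zero ht l2 l3 a b c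

/-- For every `A = (λ₁, λ₂, λ₃, a, b, c) ∈ J₃(𝕆)`, the determinant of `M_A` (on the
24-dimensional space `𝕆³`) equals the determinant (on the 8-dimensional space `𝕆`) of the
endomorphism `(det_𝕆(A) − 2·Re(c·(a·b)))·id + L_a∘L_b∘L_c + L_c̄∘L_b̄∘L_ā`. -/
theorem det_MA_eq_det_eight_dim (l1 l2 l3 : ℂ) (a b c : Oct) :
    LinearMap.det (MA l1 l2 l3 a b c) =
      LinearMap.det
        ((detO l1 l2 l3 a b c - 2 * oRe (omul c (omul a b))) • (LinearMap.id : Oct →ₗ[ℂ] Oct)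
          + Lmul a ∘ₗ Lmul b ∘ₗ Lmul c
          + Lmul (oconj c) ∘ₗ Lmul (oconj b) ∘ₗ Lmul (oconj a)) := by
  rw [det_MA_eq_det_eightDimOp, eightDimOp, detO]
  congr 4
  ring

end Oct
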